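/- Let v, k, λ be natural numbers with λ ≥ 2 and k ≥ λ, and let N be a symmetric v × v matrix with entries in {0, 1} all of whose diagonal entries equal 1, satisfying N · Nᵀ = (k − λ)·I + λ·J, where I is the identity matrix and J is the all-one matrix (i.e., N is a symmetric incidence matrix with all-one diagonal of a symmetric 2-(v, k, λ) block design). Then A = N − I is the adjacency matrix of a strongly regular graph with parameters (v, k − 1, λ − 2, λ): the simple graph on v vertices in which u and w are adjacent iff u ≠ w and N(u, w) = 1 is (k−1)-regular, every pair of adjacent vertices has exactly λ − 2 common neighbours, and every pair of distinct non-adjacent vertices has exactly λ common neighbours. -/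

import Mathlib

/-!
Because `N` is a 0-1 matrix with unit diagonal, `N = A + I` for the adjacency matrix `A` of `Γ`,
and `A` is symmetric, so `N * Nᵀ = A² + 2A + I`. The entry `(A²) u w` counts the common
neighbours of `u` and `w` (for `u = w`, the neighbours of `u`), so comparing entries with
`(k - λ) I + λ J` on the diagonal, on edges and on non-edges gives the three counts.
-/

open Matrix

namespace SimpleGraph

variable {V α : Type*} (G : SimpleGraph V) [DecidableRel G.Adj]

theorem adjMatrix_mul_self_apply [Fintype V] [NonAssocSemiring α] (v w : V) :
    (G.adjMatrix α * G.adjMatrix α) v w = Nat.card (G.commonNeighbors v w) := by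
  classical
  rw [Nat.card_eq_card_toFinset, adjMatrix_mul_apply]
  simp only [adjMatrix_apply, Finset.sum_boole]
  congr 2
  ext u
  simp [mem_commonNeighbors, adj_comm]

theorem eq_adjMatrix_add_one_of_adj_iff [DecidableEq V] [NonAssocSemiring α] {N : Matrix V V α}
    (h01 : ∀ i j, N i j = 0 ∨ N i j = 1) (hdiag : ∀ i, N i i = 1)
    (hadj : ∀ u w, G.Adj u w ↔ u ≠ w ∧ N u w = 1) :
    N = G.adjMatrix α + 1 := by
  ext u w
  obtain rfl | huw := eq_or_ne u w
  · simp [hdiag]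
  · rcases h01 u w with h | h <;> simp [adjMatrix_apply, one_apply_ne huw, hadj, huw, h]

theorem adjMatrix_add_one_mul_transpose_apply [Fintype V] [DecidableEq V] [CommRing α]
    (v w : V) :
    ((G.adjMatrix α + 1) * (G.adjMatrix α + 1)ᵀ : Matrix V V α) v w =
      Nat.card (G.commonNeighbors v w) + 2 * G.adjMatrix α v w + (1 : Matrix V V α) v w := by
  rw [transpose_add, transpose_adjMatrix, transpose_one, add_mul, mul_add, mul_add, mul_one,
    one_mul, mul_one]
  simp only [Matrix.add_apply, adjMatrix_mul_self_apply]
  ring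

end SimpleGraph

theorem srg_from_symmetric_design_allOne_diagonal_general
    (v k lam : ℕ)
    (N : Matrix (Fin v) (Fin v) ℤ)
    (h01 : ∀ i j, N i j = 0 ∨ N i j = 1)
    (hdiag : ∀ i, N i i = 1)
    (hdes : N * Nᵀ = ((k : ℤ) - (lam : ℤ)) • (1 : Matrix (Fin v) (Fin v) ℤ) +
      (lam : ℤ) • Matrix.of (fun _ _ => (1 : ℤ)))
    (Γ : SimpleGraph (Fin v))
    (hΓ : ∀ u w : Fin v, Γ.Adj u w ↔ u ≠ w ∧ N u w = 1) :
    (∀ u : Fin v, Nat.card (Γ.neighborSet u) = k - 1) ∧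
    (∀ u w : Fin v, Γ.Adj u w → Nat.card (Γ.commonNeighbors u w) = lam - 2) ∧
    (∀ u w : Fin v, u ≠ w → ¬Γ.Adj u w → Nat.card (Γ.commonNeighbors u w) = lam) := by
  classical
  rw [Γ.eq_adjMatrix_add_one_of_adj_iff h01 hdiag hΓ] at hdes
  have hentry (u w : Fin v) := congrFun₂ hdes u w
  simp only [Γ.adjMatrix_add_one_mul_transpose_apply, Matrix.add_apply, Matrix.smul_apply,
    of_apply, smul_eq_mul, mul_one] at hentry
  refine ⟨fun u => ?_, fun u w hadj => ?_, fun u w hne hnadj => ?_⟩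
  · have h := hentry u u
    have hcn : Γ.commonNeighbors u u = Γ.neighborSet u := Set.inter_self _
    simp only [hcn, SimpleGraph.adjMatrix_apply, Γ.irrefl, if_false, one_apply_eq, mul_one] at h
    omega
  · have h := hentry u w
    simp only [SimpleGraph.adjMatrix_apply, hadj, if_true, one_apply_ne hadj.ne] at h
    omega
  · have h := hentry u w
    simp only [SimpleGraph.adjMatrix_apply, hnadj, if_false, one_apply_ne hne] at h
    omega

/-- If `N` is a symmetric `v × v` 0-1 matrix with all-one diagonal
satisfying `N * Nᵀ = (k - λ) • I + λ • J` (a symmetric incidence matrix with all-one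
diagonal of a symmetric 2-(v, k, λ) design), where `λ ≥ 2` and `k ≥ λ`, then `N - I` is
the adjacency matrix of a strongly regular graph with parameters `(v, k - 1, λ - 2, λ)`:
the graph on `v` vertices with `u ~ w` iff `u ≠ w` and `N u w = 1` is `(k-1)`-regular,
adjacent vertices have exactly `λ - 2` common neighbours, and distinct non-adjacent
vertices have exactly `λ` common neighbours. -/
theorem srg_from_symmetric_design_allOne_diagonal
    (v k lam : ℕ) (hlam : 2 ≤ lam) (hk : lam ≤ k)
    (N : Matrix (Fin v) (Fin v) ℤ)
    (hsymm : N.IsSymm)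
    (h01 : ∀ i j, N i j = 0 ∨ N i j = 1)
    (hdiag : ∀ i, N i i = 1)
    (hdes : N * Nᵀ = ((k : ℤ) - (lam : ℤ)) • (1 : Matrix (Fin v) (Fin v) ℤ) +
      (lam : ℤ) • Matrix.of (fun _ _ => (1 : ℤ)))
    (Γ : SimpleGraph (Fin v))
    (hΓ : ∀ u w : Fin v, Γ.Adj u w ↔ u ≠ w ∧ N u w = 1) :
    (∀ u : Fin v, Nat.card (Γ.neighborSet u) = k - 1) ∧
    (∀ u w : Fin v, Γ.Adj u w → Nat.card (Γ.commonNeighbors u w) = lam - 2) ∧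
    (∀ u w : Fin v, u ≠ w → ¬Γ.Adj u w → Nat.card (Γ.commonNeighbors u w) = lam) :=
  srg_from_symmetric_design_allOne_diagonal_general v k lam N h01 hdiag hdes Γ hΓ
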